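/- A homogeneous polynomial p of degree m on ℝ^{n+1} that is harmonic (Δp = 0 for the Euclidean Laplacian) restricts on the unit sphere S^n to an eigenfunction of the spherical Laplace–Beltrami operator with eigenvalue m(m+n-1): Δ_{S^n}(p|_{S^n}) + m(m+n-1)·(p|_{S^n}) = 0. -/

import Mathlib

/-!
Homogeneity gives `p(y/‖y‖) = (‖y‖²)^r p(y)` with `r = -m/2`, so the
product rule `Δ(fg) = f Δg + 2⟨∇f, ∇g⟩ + g Δf` applies. On the unit sphere `Δp = 0`; Euler's
identity `⟨y, ∇p⟩ = m p` turns the cross term into `-2m² p`; and the radial formula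
`Δ(‖y‖²)^r = 2r(2r + d - 2)(‖y‖²)^(r-1)` in dimension `d = n + 1` contributes `m(m - n + 1) p`.
The sum is `-m(m + n - 1) p`.
-/

open MvPolynomial

/-- The Euclidean Laplacian of a function on `ℝ^d` (as `EuclideanSpace`),
`Δ F x = ∑ i ∂²F/∂x_i² (x)`. -/
noncomputable def eucLap {d : ℕ} (F : EuclideanSpace ℝ (Fin d) → ℝ)
    (x : EuclideanSpace ℝ (Fin d)) : ℝ :=
  ∑ i, fderiv ℝ (fun y => fderiv ℝ F y (EuclideanSpace.single i 1)) x
    (EuclideanSpace.single i 1)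

open Filter Topology

namespace MvPolynomial

variable {R σ : Type*} [CommSemiring R] [Fintype σ] {m : ℕ} {p : MvPolynomial σ R}

theorem IsHomogeneous.eval_smul (hp : p.IsHomogeneous m) (c : R) (f : σ → R) :
    eval (c • f) p = c ^ m * eval f p := by
  rw [eval_eq', eval_eq', Finset.mul_sum]
  refine Finset.sum_congr rfl fun e he => ?_
  have hdeg : ∑ i, e i = m := by
    rw [← hp (mem_support_iff.mp he)]
    simp [Finsupp.weight_apply, Finsupp.sum_fintype]
  simp only [Pi.smul_apply, smul_eq_mul, mul_pow, Finset.prod_mul_distrib,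
    Finset.prod_pow_eq_pow_sum, hdeg]
  ring

theorem IsHomogeneous.sum_mul_eval_pderiv (hp : p.IsHomogeneous m) (f : σ → R) :
    ∑ i, f i * eval f (pderiv i p) = m * eval f p := by
  simpa [map_sum, nsmul_eq_mul] using congrArg (eval f) hp.sum_X_mul_pderiv

end MvPolynomial

variable {d : ℕ}

theorem contDiff_eval_euclidean (p : MvPolynomial (Fin d) ℝ) {k : WithTop ℕ∞} :
    ContDiff ℝ k (fun y : EuclideanSpace ℝ (Fin d) => eval (fun i => y i) p) :=
  (AnalyticOnNhd.eval_linearMap' (𝕜 := ℝ)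
    (fun i => (EuclideanSpace.proj i : EuclideanSpace ℝ (Fin d) →L[ℝ] ℝ).toLinearMap) p).contDiff

theorem fderiv_eval_euclidean_single (p : MvPolynomial (Fin d) ℝ) (y : EuclideanSpace ℝ (Fin d))
    (i : Fin d) :
    fderiv ℝ (fun y : EuclideanSpace ℝ (Fin d) => eval (fun i => y i) p) y
      (EuclideanSpace.single i 1) = eval (fun j => y j) (pderiv i p) := by
  have hdiff (q : MvPolynomial (Fin d) ℝ) :
      DifferentiableAt ℝ (fun y : EuclideanSpace ℝ (Fin d) => eval (fun i => y i) q) y :=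
    (contDiff_eval_euclidean q (k := 1)).differentiable one_ne_zero y
  induction p using MvPolynomial.induction_on with
  | C a => simp
  | add q r hq hr =>
    simp only [map_add]
    rw [fderiv_fun_add (hdiff q) (hdiff r)]
    simp [hq, hr]
  | mul_X q j hq =>
    simp only [map_mul, eval_X, Derivation.leibniz, pderiv_X, smul_eq_mul]
    have hXj : HasFDerivAt (fun y : EuclideanSpace ℝ (Fin d) => y j)
        (EuclideanSpace.proj j : EuclideanSpace ℝ (Fin d) →L[ℝ] ℝ) y :=
      (EuclideanSpace.proj j : EuclideanSpace ℝ (Fin d) →L[ℝ] ℝ).hasFDerivAt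
    rw [fderiv_fun_mul (hdiff q) hXj.differentiableAt, hXj.fderiv]
    simp [hq, Pi.single_apply, PiLp.single_apply, eq_comm, apply_ite (eval _)]

theorem eucLap_eval_euclidean (p : MvPolynomial (Fin d) ℝ) (y : EuclideanSpace ℝ (Fin d)) :
    eucLap (fun y : EuclideanSpace ℝ (Fin d) => eval (fun i => y i) p) y
      = eval (fun i => y i) (∑ i, pderiv i (pderiv i p)) := by
  simp only [eucLap, fderiv_eval_euclidean_single, map_sum]

theorem ContDiffAt.differentiableAt_fderiv_apply {E : Type*} [NormedAddCommGroup E]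
    [NormedSpace ℝ E] {f : E → ℝ} {x : E} (hf : ContDiffAt ℝ 2 f x) (v : E) :
    DifferentiableAt ℝ (fun y => fderiv ℝ f y v) x :=
  ((hf.fderiv_right (m := 1) (by norm_num)).differentiableAt one_ne_zero).clm_apply
    (differentiableAt_const v)

theorem eucLap_mul {f g : EuclideanSpace ℝ (Fin d) → ℝ} {x : EuclideanSpace ℝ (Fin d)}
    (hf : ContDiffAt ℝ 2 f x) (hg : ContDiffAt ℝ 2 g x) :
    eucLap (fun y => f y * g y) x = f x * eucLap g x
      + 2 * ∑ i, fderiv ℝ f x (EuclideanSpace.single i 1)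
        * fderiv ℝ g x (EuclideanSpace.single i 1)
      + g x * eucLap f x := by
  have hfg (v) : (fun y => fderiv ℝ (fun y => f y * g y) y v)
      =ᶠ[𝓝 x] fun y => f y * fderiv ℝ g y v + g y * fderiv ℝ f y v := by
    filter_upwards [hf.eventually (by simp), hg.eventually (by simp)] with y hfy hgy
    rw [fderiv_fun_mul (hfy.differentiableAt two_ne_zero) (hgy.differentiableAt two_ne_zero)]
    simp
  have hf1 := hf.differentiableAt two_ne_zero
  have hg1 := hg.differentiableAt two_ne_zero
  simp only [eucLap, Finset.mul_sum, ← Finset.sum_add_distrib]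
  refine Finset.sum_congr rfl fun i _ => ?_
  set v := EuclideanSpace.single i (1 : ℝ)
  rw [(hfg v).fderiv_eq,
    fderiv_fun_add (hf1.fun_mul (hg.differentiableAt_fderiv_apply v))
      (hg1.fun_mul (hf.differentiableAt_fderiv_apply v)),
    fderiv_fun_mul hf1 (hg.differentiableAt_fderiv_apply v),
    fderiv_fun_mul hg1 (hf.differentiableAt_fderiv_apply v)]
  simp only [add_apply, smul_apply, smul_eq_mul]
  ring

theorem eucLap_comp {φ φ' : ℝ → ℝ} {φ'' : ℝ} {g : EuclideanSpace ℝ (Fin d) → ℝ}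
    {x : EuclideanSpace ℝ (Fin d)} (hφ : ∀ᶠ t in 𝓝 (g x), HasDerivAt φ (φ' t) t)
    (hφ' : HasDerivAt φ' φ'' (g x)) (hg : ContDiffAt ℝ 2 g x) :
    eucLap (fun y => φ (g y)) x
      = φ'' * ∑ i, fderiv ℝ g x (EuclideanSpace.single i 1) ^ 2 + φ' (g x) * eucLap g x := by
  have hφg (v) : (fun y => fderiv ℝ (fun y => φ (g y)) y v)
      =ᶠ[𝓝 x] fun y => φ' (g y) * fderiv ℝ g y v := by
    filter_upwards [hg.continuousAt.eventually hφ, hg.eventually (by simp)] with y hφy hgy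
    have hφgy : HasFDerivAt (fun y => φ (g y)) (φ' (g y) • fderiv ℝ g y) y :=
      hφy.comp_hasFDerivAt y (hgy.differentiableAt two_ne_zero).hasFDerivAt
    simp [hφgy.fderiv]
  have hφ'g : HasFDerivAt (fun y => φ' (g y)) (φ'' • fderiv ℝ g x) x :=
    hφ'.comp_hasFDerivAt x (hg.differentiableAt two_ne_zero).hasFDerivAt
  simp only [eucLap, Finset.mul_sum, ← Finset.sum_add_distrib]
  refine Finset.sum_congr rfl fun i _ => ?_
  set v := EuclideanSpace.single i (1 : ℝ)
  rw [(hφg v).fderiv_eq,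
    fderiv_fun_mul hφ'g.differentiableAt (hg.differentiableAt_fderiv_apply v), hφ'g.fderiv]
  simp only [add_apply, smul_apply, smul_eq_mul]
  ring

theorem fderiv_norm_sq_single (y : EuclideanSpace ℝ (Fin d)) (i : Fin d) :
    fderiv ℝ (fun y : EuclideanSpace ℝ (Fin d) => ‖y‖ ^ 2) y (EuclideanSpace.single i 1)
      = 2 * y i := by
  simp [fderiv_norm_sq_apply, EuclideanSpace.inner_single_right]

theorem eucLap_norm_sq (x : EuclideanSpace ℝ (Fin d)) :
    eucLap (fun y => ‖y‖ ^ 2) x = 2 * d := by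
  have hlin (i : Fin d) : fderiv ℝ (fun y : EuclideanSpace ℝ (Fin d) => 2 * y i) x
      (EuclideanSpace.single i 1) = 2 := by
    have h : HasFDerivAt (fun y : EuclideanSpace ℝ (Fin d) => 2 * y i)
        ((2 : ℝ) • (EuclideanSpace.proj i : EuclideanSpace ℝ (Fin d) →L[ℝ] ℝ)) x :=
      (EuclideanSpace.proj i : EuclideanSpace ℝ (Fin d) →L[ℝ] ℝ).hasFDerivAt.const_mul 2
    simp [h.fderiv]
  simp only [eucLap, fderiv_norm_sq_single, hlin]
  simp [mul_comm]

theorem fderiv_rpow_norm_sq_single {x : EuclideanSpace ℝ (Fin d)} (hx : x ≠ 0) (r : ℝ)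
    (i : Fin d) :
    fderiv ℝ (fun y : EuclideanSpace ℝ (Fin d) => (‖y‖ ^ 2) ^ r) x (EuclideanSpace.single i 1)
      = 2 * r * (‖x‖ ^ 2) ^ (r - 1) * x i := by
  have h := ((hasStrictFDerivAt_norm_sq x).hasFDerivAt.rpow_const (p := r)
    (Or.inl (by positivity)))
  simp [h.fderiv, EuclideanSpace.inner_single_right]
  ring

theorem eucLap_rpow_norm_sq {x : EuclideanSpace ℝ (Fin d)} (hx : x ≠ 0) (r : ℝ) :
    eucLap (fun y => (‖y‖ ^ 2) ^ r) x = 2 * r * (2 * r + d - 2) * (‖x‖ ^ 2) ^ (r - 1) := by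
  have hx2 : 0 < ‖x‖ ^ 2 := by positivity
  have hφ : ∀ᶠ t in 𝓝 (‖x‖ ^ 2), HasDerivAt (· ^ r) (r * t ^ (r - 1)) t :=
    (lt_mem_nhds hx2).mono fun t ht => Real.hasDerivAt_rpow_const (Or.inl ht.ne')
  have hφ' : HasDerivAt (fun t => r * t ^ (r - 1)) (r * ((r - 1) * (‖x‖ ^ 2) ^ (r - 1 - 1)))
      (‖x‖ ^ 2) :=
    (Real.hasDerivAt_rpow_const (Or.inl hx2.ne')).const_mul r
  rw [eucLap_comp hφ hφ' (contDiff_norm_sq ℝ).contDiffAt, eucLap_norm_sq]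
  simp only [fderiv_norm_sq_single, mul_pow, ← Finset.mul_sum, ← EuclideanSpace.real_norm_sq_eq]
  have hpow : (‖x‖ ^ 2) ^ (r - 1) = (‖x‖ ^ 2) ^ (r - 1 - 1) * ‖x‖ ^ 2 := by
    rw [← Real.rpow_add_one hx2.ne', sub_add_cancel]
  rw [hpow]
  ring

theorem MvPolynomial.IsHomogeneous.eval_div_norm {m : ℕ} {p : MvPolynomial (Fin d) ℝ}
    (hp : p.IsHomogeneous m) (y : EuclideanSpace ℝ (Fin d)) :
    eval (fun i => y i / ‖y‖) p = (‖y‖ ^ 2) ^ (-(m : ℝ) / 2) * eval (fun i => y i) p := by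
  -- no `y ≠ 0` needed: at `y = 0` both sides agree through `0⁻¹ = 0` and `0 ^ s = 0` for `s ≠ 0`
  have hnorm : (‖y‖ ^ 2) ^ (-(m : ℝ) / 2) = ‖y‖⁻¹ ^ m := by
    rw [← Real.rpow_natCast, ← Real.rpow_mul (norm_nonneg y), Nat.cast_ofNat,
      show (2 : ℝ) * (-(m : ℝ) / 2) = -m by ring, Real.rpow_neg (norm_nonneg y),
      Real.rpow_natCast, inv_pow]
  have hdiv : (fun i => y i / ‖y‖) = ‖y‖⁻¹ • fun i => y i := by
    ext i
    simp [div_eq_inv_mul]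
  rw [hdiv, hp.eval_smul, hnorm]

/-- The spherical Laplacian of `p|_{Sⁿ}` is computed, as usual, as the Euclidean Laplacian of
the degree-zero homogeneous extension `F(y) = p(y/‖y‖)`, evaluated on the sphere. -/
theorem stmt8 (n m : ℕ) (p : MvPolynomial (Fin (n + 1)) ℝ)
    (hp : p.IsHomogeneous m)
    (hharm : ∑ i, pderiv i (pderiv i p) = 0) :
    ∀ x : EuclideanSpace ℝ (Fin (n + 1)), ‖x‖ = 1 →
      eucLap (fun y => eval (fun i => y i / ‖y‖) p) x
        + ((m * (m + n - 1) : ℕ) : ℝ) * eval (fun i => x i) p = 0 := by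
  intro x hx
  have hx0 : x ≠ 0 := by rintro rfl; simp at hx
  set r : ℝ := -(m : ℝ) / 2
  have hradial : ContDiffAt ℝ 2 (fun y : EuclideanSpace ℝ (Fin (n + 1)) => (‖y‖ ^ 2) ^ r) x :=
    (contDiff_norm_sq ℝ).contDiffAt.rpow_const_of_ne (by positivity)
  have hgrad : ∑ i, 2 * r * (‖x‖ ^ 2) ^ (r - 1) * x i * eval (fun j => x j) (pderiv i p)
      = 2 * r * m * eval (fun i => x i) p := by
    simp only [hx, one_pow, Real.one_rpow, mul_one, mul_assoc, ← Finset.mul_sum,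
      hp.sum_mul_eval_pderiv]
  have hcast : ((m * (m + n - 1) : ℕ) : ℝ) = m * (m + n - 1) := by
    rcases Nat.eq_zero_or_pos m with rfl | hm
    · simp
    · push_cast [Nat.cast_sub (show 1 ≤ m + n by omega)]
      ring
  rw [funext hp.eval_div_norm, eucLap_mul hradial (contDiff_eval_euclidean p).contDiffAt,
    eucLap_eval_euclidean, hharm, eucLap_rpow_norm_sq hx0]
  simp only [fderiv_rpow_norm_sq_single hx0, fderiv_eval_euclidean_single]
  rw [hgrad, hcast]
  simp only [hx, one_pow, Real.one_rpow, map_zero]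
  push_cast
  ring
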